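/- arXiv:math/0404026 — 2 statements merged into one kernel-verified Lean document; each statement's English description precedes it below -/
import Mathlib

section
/- Let ((A_p)_{p∈G}, (Δ_{p,q}), ε, (S_p)) be a finite-type Hopf G-coalgebra over a field k. Fix p ∈ G, let (e_i) be a basis of A_{p⁻¹} with dual basis (f_i) in (A_{p⁻¹})*, and let g ∈ (A_p)*. For each i set h_i := f_i·g ∈ (A_e)* (so h_i = (f_i ⊗ g) ∘ Δ_{p⁻¹,p}). Then g(a) = Σ_i φ_{h_i}^p(a · S_{p⁻¹}(e_i)) for all a ∈ A_p. -/
open TensorProduct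
set_option linter.unusedSectionVars false
set_option maxHeartbeats 1000000
set_option synthInstance.maxHeartbeats 400000

universe u v w

variable (k : Type u) [Field k] {G : Type v} [Group G]

/-- Transport of elements along an equality of indices. -/
def castL (A : G → Type w) [∀ p, Ring (A p)] [∀ p, Algebra k (A p)]
    {p q : G} (h : p = q) : A p →ₗ[k] A q := by subst h; exact LinearMap.id


section ExtHelpers
variable {k : Type u} [Field k]
variable {M N P Q M' N' P' R : Type*}
  [AddCommMonoid M] [AddCommMonoid N] [AddCommMonoid P] [AddCommMonoid Q]
  [AddCommMonoid M'] [AddCommMonoid N'] [AddCommMonoid P'] [AddCommMonoid R]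
  [Module k M] [Module k N] [Module k P] [Module k Q]
  [Module k M'] [Module k N'] [Module k P'] [Module k R]

lemma ext3R {f g : M ⊗[k] (N ⊗[k] P) →ₗ[k] R}
    (h : ∀ (m : M) (n : N) (p : P), f (m ⊗ₜ (n ⊗ₜ p)) = g (m ⊗ₜ (n ⊗ₜ p))) : f = g := by
  apply TensorProduct.ext'
  intro m t
  induction t with
  | zero => simp only [tmul_zero, zero_tmul, map_zero]
  | tmul n p => exact h m n p
  | add a b ha hb => rw [tmul_add, map_add, map_add, ha, hb]

lemma ext4R {f g : M ⊗[k] (N ⊗[k] (P ⊗[k] Q)) →ₗ[k] R}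
    (h : ∀ (m : M) (n : N) (p : P) (q : Q),
      f (m ⊗ₜ (n ⊗ₜ (p ⊗ₜ q))) = g (m ⊗ₜ (n ⊗ₜ (p ⊗ₜ q)))) : f = g := by
  apply ext3R
  intro m n t
  induction t with
  | zero => simp only [tmul_zero, zero_tmul, map_zero]
  | tmul p q => exact h m n p q
  | add a b ha hb => rw [tmul_add, tmul_add, map_add, map_add, ha, hb]

lemma ext22 {f g : (M ⊗[k] N) ⊗[k] (P ⊗[k] Q) →ₗ[k] R}
    (h : ∀ (m : M) (n : N) (p : P) (q : Q),
      f ((m ⊗ₜ n) ⊗ₜ (p ⊗ₜ q)) = g ((m ⊗ₜ n) ⊗ₜ (p ⊗ₜ q))) : f = g := by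
  apply TensorProduct.ext'
  intro t t'
  induction t with
  | zero => simp only [tmul_zero, zero_tmul, map_zero]
  | tmul m n =>
    induction t' with
    | zero => simp only [tmul_zero, zero_tmul, map_zero]
    | tmul p q => exact h m n p q
    | add a b ha hb => rw [tmul_add, map_add, map_add, ha, hb]
  | add a b ha hb => rw [add_tmul, map_add, map_add, ha, hb]

lemma ext33 {f g : (M ⊗[k] (N ⊗[k] P)) ⊗[k] (M' ⊗[k] (N' ⊗[k] P')) →ₗ[k] R}
    (h : ∀ (m : M) (n : N) (p : P) (m' : M') (n' : N') (p' : P'),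
      f ((m ⊗ₜ (n ⊗ₜ p)) ⊗ₜ (m' ⊗ₜ (n' ⊗ₜ p')))
        = g ((m ⊗ₜ (n ⊗ₜ p)) ⊗ₜ (m' ⊗ₜ (n' ⊗ₜ p')))) : f = g := by
  apply TensorProduct.ext'
  intro t t'
  induction t with
  | zero => simp only [tmul_zero, zero_tmul, map_zero]
  | tmul m u =>
    induction u with
    | zero => simp only [tmul_zero, zero_tmul, map_zero]
    | tmul n p =>
      induction t' with
      | zero => simp only [tmul_zero, zero_tmul, map_zero]
      | tmul m' u' =>
        induction u' with
        | zero => simp only [tmul_zero, zero_tmul, map_zero]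
        | tmul n' p' => exact h m n p m' n' p'
        | add a b ha hb => rw [tmul_add, tmul_add, map_add, map_add, ha, hb]
      | add a b ha hb => rw [tmul_add, map_add, map_add, ha, hb]
    | add a b ha hb => rw [tmul_add, add_tmul, map_add, map_add, ha, hb]
  | add a b ha hb => rw [add_tmul, map_add, map_add, ha, hb]

end ExtHelpers

/-- A (finite-type) Hopf `G`-coalgebra: a family of unital `k`-algebras `(A p)`,
comultiplications `Δ p q : A (p*q) → A p ⊗ A q` which are unital algebra maps and
coassociative, a counit `ε : A 1 → k`, and antipode maps `S p : A p → A p⁻¹`. -/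
structure HopfGCoalgebra (A : G → Type w) [∀ p, Ring (A p)] [∀ p, Algebra k (A p)] where
  Δ : ∀ p q : G, A (p * q) →ₐ[k] (A p ⊗[k] A q)
  coassoc : ∀ (p q r : G) (a : A (p * q * r)),
    (Algebra.TensorProduct.assoc k k k (A p) (A q) (A r))
        ((Algebra.TensorProduct.map (Δ p q) (AlgHom.id k (A r))) ((Δ (p * q) r) a))
      = (Algebra.TensorProduct.map (AlgHom.id k (A p)) (Δ q r))
          ((Δ p (q * r)) (castL k A (mul_assoc p q r) a))
  ε : A (1 : G) →ₐ[k] k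
  counit_right : ∀ (p : G) (a : A (p * 1)),
    (TensorProduct.rid k (A p))
        (TensorProduct.map LinearMap.id ε.toLinearMap ((Δ p 1) a))
      = castL k A (mul_one p) a
  counit_left : ∀ (p : G) (a : A (1 * p)),
    (TensorProduct.lid k (A p))
        (TensorProduct.map ε.toLinearMap LinearMap.id ((Δ 1 p) a))
      = castL k A (one_mul p) a
  S : ∀ p : G, A p →ₗ[k] A p⁻¹
  antipode_left : ∀ (p : G) (a : A (p⁻¹ * p)),
    LinearMap.mul' k (A p)
        (TensorProduct.map ((castL k A (inv_inv p)).comp (S p⁻¹)) LinearMap.id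
          ((Δ p⁻¹ p) a))
      = ε (castL k A (inv_mul_cancel p) a) • 1
  antipode_right : ∀ (p : G) (a : A (p * p⁻¹)),
    LinearMap.mul' k (A p)
        (TensorProduct.map LinearMap.id ((castL k A (inv_inv p)).comp (S p⁻¹))
          ((Δ p p⁻¹) a))
      = ε (castL k A (mul_inv_cancel p) a) • 1

/-- A left integral on a Hopf `G`-coalgebra: a family of functionals `φ p : A p → k`
with `(id ⊗ φ q)(Δ p q a) = φ (pq) a • 1` in `A p`. -/
def HopfGCoalgebra.IsLeftIntegral
    {k : Type u} [Field k] {G : Type v} [Group G]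
    {A : G → Type w} [∀ p, Ring (A p)] [∀ p, Algebra k (A p)]
    (H : HopfGCoalgebra k A) (φ : ∀ p : G, A p →ₗ[k] k) : Prop :=
  ∀ (p q : G) (a : A (p * q)),
    (TensorProduct.rid k (A p))
        (TensorProduct.map LinearMap.id (φ q) ((H.Δ p q) a))
      = φ (p * q) a • 1

/-- The pairing `f·g := (f ⊗ g) ∘ Δ_{p,q}` of linear functionals on the components
of a Hopf `G`-coalgebra. -/
noncomputable def HopfGCoalgebra.dmul
    {k : Type u} [Field k] {G : Type v} [Group G]
    {A : G → Type w} [∀ p, Ring (A p)] [∀ p, Algebra k (A p)]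
    (H : HopfGCoalgebra k A) {p q : G}
    (f : A p →ₗ[k] k) (g : A q →ₗ[k] k) : A (p * q) →ₗ[k] k :=
  LinearMap.mul' k k ∘ₗ TensorProduct.map f g ∘ₗ (H.Δ p q).toLinearMap

/-- For `f ∈ (A e)*`, the functional `φ_f^p : A p → k` given by
`φ_f^p(a) = Tr (x ↦ ((id ⊗ f) ∘ Δ_{p,e}) (a · S_{p⁻¹}(S_p x)))`. -/
noncomputable def HopfGCoalgebra.phi
    {k : Type u} [Field k] {G : Type v} [Group G]
    {A : G → Type w} [∀ p, Ring (A p)] [∀ p, Algebra k (A p)]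
    (H : HopfGCoalgebra k A) (f : A (1 : G) →ₗ[k] k) (p : G) : A p →ₗ[k] k :=
  (LinearMap.trace k (A p)) ∘ₗ
    (LinearMap.llcomp k (A p) (A p) (A p)
        ((TensorProduct.rid k (A p)).toLinearMap ∘ₗ
          TensorProduct.map LinearMap.id f ∘ₗ
          (H.Δ p 1).toLinearMap ∘ₗ castL k A (mul_one p).symm)) ∘ₗ
    (LinearMap.lcomp k (A p) (castL k A (inv_inv p) ∘ₗ (H.S p⁻¹) ∘ₗ H.S p)) ∘ₗ
    (LinearMap.mul k (A p))

namespace HopfGCoalgebra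
variable {k : Type u} [Field k] {G : Type v} [Group G]
variable {A : G → Type w} [∀ p, Ring (A p)] [∀ p, Algebra k (A p)]

lemma castL_rfl {p : G} (h : p = p) (x : A p) : castL k A h x = x := rfl

lemma castL_castL {p q r : G} (h1 : p = q) (h2 : q = r) (x : A p) :
    castL k A h2 (castL k A h1 x) = castL k A (h1.trans h2) x := by subst h1; subst h2; rfl

lemma castL_mul {p q : G} (h : p = q) (x y : A p) :
    castL k A h (x * y) = castL k A h x * castL k A h y := by subst h; rfl

lemma castL_one {p q : G} (h : p = q) : castL k A h (1 : A p) = 1 := by subst h; rfl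

lemma map_map {M N P Q M' N' : Type*} [AddCommMonoid M] [AddCommMonoid N] [AddCommMonoid P]
    [AddCommMonoid Q] [AddCommMonoid M'] [AddCommMonoid N'] [Module k M] [Module k N]
    [Module k P] [Module k Q] [Module k M'] [Module k N']
    (f : M →ₗ[k] N) (g : P →ₗ[k] Q) (f' : M' →ₗ[k] M) (g' : N' →ₗ[k] P)
    (t : M' ⊗[k] N') :
    TensorProduct.map f g (TensorProduct.map f' g' t)
      = TensorProduct.map (f ∘ₗ f') (g ∘ₗ g') t := by
  rw [TensorProduct.map_comp]; rfl

lemma castL_id {p : G} (h : p = p) : castL k A h = LinearMap.id := rfl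

lemma amap_eq {X Y X' Y' : Type*} [Ring X] [Ring Y] [Ring X'] [Ring Y']
    [Algebra k X] [Algebra k Y] [Algebra k X'] [Algebra k Y']
    (f : X →ₐ[k] X') (g : Y →ₐ[k] Y') (t : X ⊗[k] Y) :
    (Algebra.TensorProduct.map f g) t
      = TensorProduct.map f.toLinearMap g.toLinearMap t := by
  induction t with
  | zero => simp
  | tmul x y => simp [Algebra.TensorProduct.map_tmul]
  | add s t hs ht => simp [map_add, hs, ht]

lemma aassoc_eq {X Y Z : Type*} [Ring X] [Ring Y] [Ring Z]
    [Algebra k X] [Algebra k Y] [Algebra k Z] (t : (X ⊗[k] Y) ⊗[k] Z) :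
    (Algebra.TensorProduct.assoc k k k X Y Z) t
      = (TensorProduct.assoc k X Y Z) t := by
  induction t with
  | zero => simp
  | tmul u z =>
    induction u with
    | zero => simp
    | tmul x y => simp [Algebra.TensorProduct.assoc_tmul, TensorProduct.assoc_tmul]
    | add s t hs ht => simp [add_tmul, map_add, hs, ht]
  | add s t hs ht => simp [map_add, hs, ht]

variable (H : HopfGCoalgebra k A)

lemma S_castL {p q : G} (h : p = q) (h' : p⁻¹ = q⁻¹) (x : A p) :
    H.S q (castL k A h x) = castL k A h' (H.S p x) := by subst h; rfl

lemma Δ_castL {p p' q q' : G} (h1 : p = p') (h2 : q = q') (h3 : p * q = p' * q')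
    (x : A (p * q)) :
    (H.Δ p' q') (castL k A h3 x)
      = TensorProduct.map (castL k A h1) (castL k A h2) ((H.Δ p q) x) := by
  subst h1; subst h2
  show (H.Δ p q) (castL k A h3 x)
      = TensorProduct.map LinearMap.id LinearMap.id ((H.Δ p q) x)
  rw [castL_rfl, TensorProduct.map_id, LinearMap.id_apply]

/-- antipode axiom with `S q` on the first factor of `Δ q q⁻¹`. -/
lemma antipode_left' (q : G) (u : A (q * q⁻¹)) :
    LinearMap.mul' k (A q⁻¹)
        (TensorProduct.map (H.S q) LinearMap.id ((H.Δ q q⁻¹) u))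
      = H.ε (castL k A (mul_inv_cancel q) u) • 1 := by
  have h0 : q * q⁻¹ = q⁻¹⁻¹ * q⁻¹ := by rw [inv_inv]
  have h := H.antipode_left q⁻¹ (castL k A h0 u)
  rw [Δ_castL H (inv_inv q).symm rfl h0 u] at h
  rw [map_map] at h
  have e1 : ((castL k A (inv_inv q⁻¹)).comp (H.S q⁻¹⁻¹)) ∘ₗ castL k A (inv_inv q).symm
      = H.S q := by
    apply LinearMap.ext; intro x
    simp only [LinearMap.comp_apply]
    rw [S_castL H (inv_inv q).symm (by rw [inv_inv]) x, castL_castL, castL_rfl]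
  have e2 : (LinearMap.id : A q⁻¹ →ₗ[k] A q⁻¹) ∘ₗ castL k A rfl = LinearMap.id := rfl
  rw [e1, e2] at h
  rw [castL_castL] at h
  exact h

/-- antipode axiom with `S q` on the second factor of `Δ q⁻¹ q`. -/
lemma antipode_right' (q : G) (u : A (q⁻¹ * q)) :
    LinearMap.mul' k (A q⁻¹)
        (TensorProduct.map LinearMap.id (H.S q) ((H.Δ q⁻¹ q) u))
      = H.ε (castL k A (inv_mul_cancel q) u) • 1 := by
  have h0 : q⁻¹ * q = q⁻¹ * q⁻¹⁻¹ := by rw [inv_inv]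
  have h := H.antipode_right q⁻¹ (castL k A h0 u)
  rw [Δ_castL H rfl (inv_inv q).symm h0 u] at h
  rw [map_map] at h
  have e1 : ((castL k A (inv_inv q⁻¹)).comp (H.S q⁻¹⁻¹)) ∘ₗ castL k A (inv_inv q).symm
      = H.S q := by
    apply LinearMap.ext; intro x
    simp only [LinearMap.comp_apply]
    rw [S_castL H (inv_inv q).symm (by rw [inv_inv]) x, castL_castL, castL_rfl]
  have e2 : (LinearMap.id : A q⁻¹ →ₗ[k] A q⁻¹) ∘ₗ castL k A rfl = LinearMap.id := rfl
  rw [e1, e2] at h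
  rw [castL_castL] at h
  exact h

lemma S_one (q : G) : H.S q (1 : A q) = 1 := by
  have h := H.antipode_left' q (1 : A (q * q⁻¹))
  rw [map_one (H.Δ q q⁻¹), Algebra.TensorProduct.one_def] at h
  rw [TensorProduct.map_tmul, LinearMap.mul'_apply, LinearMap.id_apply, mul_one] at h
  rw [castL_one, map_one H.ε, one_smul] at h
  exact h


lemma Δ_castL_right {p q q' : G} (h2 : q = q') (h3 : p * q = p * q') (x : A (p * q)) :
    (H.Δ p q') (castL k A h3 x)
      = TensorProduct.map LinearMap.id (castL k A h2) ((H.Δ p q) x) := by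
  subst h2
  rw [castL_rfl, castL_id, TensorProduct.map_id, LinearMap.id_apply]

lemma Δ_castL_left {p p' q : G} (h1 : p = p') (h3 : p * q = p' * q) (x : A (p * q)) :
    (H.Δ p' q) (castL k A h3 x)
      = TensorProduct.map (castL k A h1) LinearMap.id ((H.Δ p q) x) := by
  subst h1
  rw [castL_rfl, castL_id, TensorProduct.map_id, LinearMap.id_apply]

noncomputable def dC (q : G) : A q →ₗ[k] A q ⊗[k] A (1:G) :=
  (H.Δ q 1).toLinearMap ∘ₗ castL k A (mul_one q).symm

noncomputable def e2 (q : G) : A (1:G) →ₗ[k] A q⁻¹ ⊗[k] A q :=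
  (H.Δ q⁻¹ q).toLinearMap ∘ₗ castL k A (inv_mul_cancel q).symm

noncomputable def T3 (q : G) : A q →ₗ[k] A q ⊗[k] (A q⁻¹ ⊗[k] A q) :=
  TensorProduct.map LinearMap.id (H.e2 q) ∘ₗ H.dC q

noncomputable def cx (q : G) : A q ⊗[k] (A q⁻¹ ⊗[k] A q) →ₗ[k] A q⁻¹ ⊗[k] A q :=
  TensorProduct.map (LinearMap.mul' k (A q⁻¹) ∘ₗ TensorProduct.map (H.S q) LinearMap.id)
      LinearMap.id ∘ₗ (TensorProduct.assoc k (A q) (A q⁻¹) (A q)).symm.toLinearMap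

lemma collapse (q : G) (x : A q) :
    H.cx q (H.T3 q x) = (1 : A q⁻¹) ⊗ₜ[k] x := by
  have h1 : (1:G) = q⁻¹ * q := (inv_mul_cancel q).symm
  have h3 : q * 1 = q * (q⁻¹ * q) := by rw [inv_mul_cancel, mul_one]
  have h4 : q = q * q⁻¹ * q := by rw [mul_inv_cancel, one_mul]
  have hmic : q * q⁻¹ = 1 := mul_inv_cancel q
  have h3' : q * q⁻¹ * q = 1 * q := by rw [hmic]
  -- step 1 : T3 via the (q, q⁻¹·q)-coproduct
  have e0 : H.T3 q x
      = TensorProduct.map LinearMap.id (H.Δ q⁻¹ q).toLinearMap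
          (TensorProduct.map LinearMap.id (castL k A h1)
            ((H.Δ q 1) (castL k A (mul_one q).symm x))) := by
    rw [map_map]; rfl
  rw [← Δ_castL_right H h1 h3, castL_castL] at e0
  have hpr : (mul_one q).symm.trans h3 = h4.trans (mul_assoc q q⁻¹ q) := rfl
  rw [hpr] at e0
  -- step 2 : coassociativity
  have hco := H.coassoc q q⁻¹ q (castL k A h4 x)
  rw [amap_eq, amap_eq, aassoc_eq, AlgHom.toLinearMap_id, castL_castL] at hco
  rw [← hco] at e0
  -- step 3 : apply cx, cancel assoc
  have step3 : H.cx q (H.T3 q x)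
      = TensorProduct.map
          ((LinearMap.mul' k (A q⁻¹) ∘ₗ TensorProduct.map (H.S q) LinearMap.id)
            ∘ₗ (H.Δ q q⁻¹).toLinearMap) LinearMap.id
          ((H.Δ (q * q⁻¹) q) (castL k A h4 x)) := by
    rw [show H.cx q (H.T3 q x)
        = (TensorProduct.map (LinearMap.mul' k (A q⁻¹)
            ∘ₗ TensorProduct.map (H.S q) LinearMap.id) LinearMap.id)
          ((TensorProduct.assoc k (A q) (A q⁻¹) (A q)).symm (H.T3 q x)) from rfl, e0,
      LinearEquiv.symm_apply_apply, map_map]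
    rfl
  -- step 4 : antipode
  have e4 : (LinearMap.mul' k (A q⁻¹) ∘ₗ TensorProduct.map (H.S q) LinearMap.id)
        ∘ₗ (H.Δ q q⁻¹).toLinearMap
      = LinearMap.toSpanSingleton k (A q⁻¹) 1 ∘ₗ H.ε.toLinearMap ∘ₗ castL k A hmic := by
    apply LinearMap.ext; intro u
    simp only [LinearMap.comp_apply, AlgHom.toLinearMap_apply,
      LinearMap.toSpanSingleton_apply]
    exact H.antipode_left' q u
  rw [e4] at step3
  -- step 5 : move the cast to the coproduct
  have e7 : TensorProduct.map
        (LinearMap.toSpanSingleton k (A q⁻¹) 1 ∘ₗ H.ε.toLinearMap ∘ₗ castL k A hmic)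
        LinearMap.id ((H.Δ (q * q⁻¹) q) (castL k A h4 x))
      = TensorProduct.map (LinearMap.toSpanSingleton k (A q⁻¹) 1 ∘ₗ H.ε.toLinearMap)
          LinearMap.id
          (TensorProduct.map (castL k A hmic) LinearMap.id
            ((H.Δ (q * q⁻¹) q) (castL k A h4 x))) := by
    rw [map_map]; rfl
  rw [e7, ← Δ_castL_left H hmic h3', castL_castL] at step3
  -- step 6 : split off the unit map and use the counit
  have e8 : TensorProduct.map
        (LinearMap.toSpanSingleton k (A q⁻¹) 1 ∘ₗ H.ε.toLinearMap) LinearMap.id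
        ((H.Δ 1 q) (castL k A (h4.trans h3') x))
      = TensorProduct.map (LinearMap.toSpanSingleton k (A q⁻¹) 1) LinearMap.id
          (TensorProduct.map H.ε.toLinearMap LinearMap.id
            ((H.Δ 1 q) (castL k A (h4.trans h3') x))) := by
    rw [map_map]; rfl
  rw [e8] at step3
  have e9 : ∀ t : k ⊗[k] (A q),
      TensorProduct.map (LinearMap.toSpanSingleton k (A q⁻¹) 1) LinearMap.id t
        = (1 : A q⁻¹) ⊗ₜ[k] (TensorProduct.lid k (A q) t) := by
    intro t; induction t with
    | zero => simp
    | tmul c b =>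
      simp only [TensorProduct.map_tmul, LinearMap.toSpanSingleton_apply,
        LinearMap.id_apply, TensorProduct.lid_tmul]
      rw [TensorProduct.smul_tmul]
    | add s t hs ht => simp only [map_add, hs, ht, tmul_add]
  rw [e9] at step3
  rw [H.counit_left q, castL_castL, castL_rfl] at step3
  exact step3

/-! ### Antimultiplicativity of the antipode -/

noncomputable def phi2 (q : G) :
    (A q⁻¹ ⊗[k] A q) ⊗[k] (A q ⊗[k] (A q⁻¹ ⊗[k] A q)) →ₗ[k] A q⁻¹ :=
  LinearMap.mul' k (A q⁻¹) ∘ₗ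
    TensorProduct.map
      (LinearMap.mul' k (A q⁻¹) ∘ₗ TensorProduct.map (H.S q) LinearMap.id
        ∘ₗ (TensorProduct.comm k (A q⁻¹) (A q)).toLinearMap)
      (LinearMap.mul' k (A q⁻¹)
        ∘ₗ TensorProduct.map LinearMap.id (H.S q ∘ₗ LinearMap.mul' k (A q))
        ∘ₗ (TensorProduct.leftComm k (A q) (A q⁻¹) (A q)).toLinearMap)
    ∘ₗ (TensorProduct.tensorTensorTensorComm k (A q⁻¹) (A q) (A q)
          (A q⁻¹ ⊗[k] A q)).toLinearMap

noncomputable def phi5 (q : G) : A q ⊗[k] (A q⁻¹ ⊗[k] A q) →ₗ[k] A q⁻¹ :=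
  LinearMap.mul' k (A q⁻¹)
    ∘ₗ TensorProduct.map LinearMap.id (H.S q ∘ₗ LinearMap.mul' k (A q))
    ∘ₗ (TensorProduct.leftComm k (A q) (A q⁻¹) (A q)).toLinearMap

lemma phi2_tmul (q : G) (w : A q⁻¹) (x3 : A q) (y1 : A q) (y2 : A q⁻¹) (y3 : A q) :
    H.phi2 q ((w ⊗ₜ x3) ⊗ₜ (y1 ⊗ₜ (y2 ⊗ₜ y3)))
      = (H.S q y1 * w) * (y2 * H.S q (x3 * y3)) := by
  simp [phi2, TensorProduct.tensorTensorTensorComm_tmul, TensorProduct.comm_tmul,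
    TensorProduct.leftComm_tmul, LinearMap.mul'_apply]

lemma phi5_tmul (q : G) (x : A q) (v : A q⁻¹) (y : A q) :
    H.phi5 q (x ⊗ₜ (v ⊗ₜ y)) = v * H.S q (x * y) := by
  simp [phi5, TensorProduct.leftComm_tmul, LinearMap.mul'_apply]

lemma cx_tmul (q : G) (n : A q) (p : A q⁻¹) (r : A q) :
    H.cx q (n ⊗ₜ (p ⊗ₜ r)) = (H.S q n * p) ⊗ₜ r := by
  simp [cx, TensorProduct.assoc_symm_tmul, LinearMap.mul'_apply]

lemma step_x1 (q : G) :
    H.phi2 q ∘ₗ TensorProduct.map (TensorProduct.mk k (A q⁻¹) (A q) 1) LinearMap.id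
      = H.phi5 q ∘ₗ TensorProduct.map LinearMap.id (H.cx q) := by
  apply ext4R
  intro m n p r
  simp only [LinearMap.comp_apply, TensorProduct.map_tmul, TensorProduct.mk_apply,
    LinearMap.id_apply, H.phi2_tmul, H.cx_tmul, H.phi5_tmul]
  rw [mul_one, mul_assoc]

noncomputable def G2 (q : G) : (A q⁻¹ ⊗[k] A q) ⊗[k] (A q⁻¹ ⊗[k] A q) →ₗ[k] A q⁻¹ :=
  LinearMap.mul' k (A q⁻¹)
    ∘ₗ TensorProduct.map (LinearMap.mul' k (A q⁻¹)) (H.S q ∘ₗ LinearMap.mul' k (A q))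
    ∘ₗ (TensorProduct.tensorTensorTensorComm k (A q⁻¹) (A q) (A q⁻¹) (A q)).toLinearMap

lemma G2_tmul (q : G) (c : A q⁻¹) (b : A q) (c' : A q⁻¹) (b' : A q) :
    H.G2 q ((c ⊗ₜ b) ⊗ₜ (c' ⊗ₜ b')) = (c * c') * H.S q (b * b') := by
  simp [G2, TensorProduct.tensorTensorTensorComm_tmul, LinearMap.mul'_apply]

noncomputable def phiB (q : G) :
    (A q ⊗[k] (A q⁻¹ ⊗[k] A q)) ⊗[k] (A q ⊗[k] (A q⁻¹ ⊗[k] A q)) →ₗ[k] A q⁻¹ :=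
  LinearMap.mul' k (A q⁻¹)
    ∘ₗ TensorProduct.map
        (LinearMap.mul' k (A q⁻¹) ∘ₗ TensorProduct.map (H.S q) (H.S q)
          ∘ₗ (TensorProduct.comm k (A q) (A q)).toLinearMap)
        (H.G2 q)
    ∘ₗ (TensorProduct.tensorTensorTensorComm k (A q) (A q⁻¹ ⊗[k] A q) (A q)
          (A q⁻¹ ⊗[k] A q)).toLinearMap

lemma step_b1 (q : G) :
    H.phi2 q ∘ₗ TensorProduct.map (H.cx q) LinearMap.id = H.phiB q := by
  apply ext33
  intro m n p m' n' p'
  simp only [LinearMap.comp_apply, TensorProduct.map_tmul, LinearMap.id_apply,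
    H.cx_tmul, H.phi2_tmul]
  show _ = (LinearMap.mul' k (A q⁻¹))
      (TensorProduct.map _ _ ((TensorProduct.tensorTensorTensorComm k (A q) _ (A q) _)
        ((m ⊗ₜ (n ⊗ₜ p)) ⊗ₜ (m' ⊗ₜ (n' ⊗ₜ p')))))
  simp only [TensorProduct.tensorTensorTensorComm_tmul, TensorProduct.map_tmul,
    LinearMap.comp_apply, TensorProduct.comm_tmul, LinearMap.mul'_apply, H.G2_tmul]
  simp [mul_assoc]

lemma ttc_nat (q : G) :
    (TensorProduct.tensorTensorTensorComm k (A q) (A q⁻¹ ⊗[k] A q) (A q)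
        (A q⁻¹ ⊗[k] A q)).toLinearMap
      ∘ₗ TensorProduct.map (TensorProduct.map LinearMap.id (H.e2 q))
          (TensorProduct.map LinearMap.id (H.e2 q))
      = TensorProduct.map LinearMap.id (TensorProduct.map (H.e2 q) (H.e2 q))
          ∘ₗ (TensorProduct.tensorTensorTensorComm k (A q) (A 1) (A q)
                (A 1)).toLinearMap := by
  apply ext22
  intro m n p r
  simp [TensorProduct.tensorTensorTensorComm_tmul]

lemma G2e2 (q : G) :
    H.G2 q ∘ₗ TensorProduct.map (H.e2 q) (H.e2 q)
      = LinearMap.toSpanSingleton k (A q⁻¹) 1 ∘ₗ H.ε.toLinearMap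
          ∘ₗ LinearMap.mul' k (A (1:G)) := by
  have claim1 : H.G2 q
      = LinearMap.mul' k (A q⁻¹) ∘ₗ TensorProduct.map LinearMap.id (H.S q)
          ∘ₗ LinearMap.mul' k (A q⁻¹ ⊗[k] A q) := by
    apply ext22
    intro c b c' b'
    simp only [LinearMap.comp_apply, LinearMap.mul'_apply,
      Algebra.TensorProduct.tmul_mul_tmul, TensorProduct.map_tmul,
      LinearMap.id_apply, H.G2_tmul]
  have claim2 : LinearMap.mul' k (A q⁻¹ ⊗[k] A q)
        ∘ₗ TensorProduct.map (H.e2 q) (H.e2 q)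
      = H.e2 q ∘ₗ LinearMap.mul' k (A (1:G)) := by
    apply TensorProduct.ext'
    intro u v
    simp only [LinearMap.comp_apply, TensorProduct.map_tmul, LinearMap.mul'_apply]
    show H.e2 q u * H.e2 q v = H.e2 q (u * v)
    show (H.Δ q⁻¹ q) (castL k A (inv_mul_cancel q).symm u)
        * (H.Δ q⁻¹ q) (castL k A (inv_mul_cancel q).symm v) = _
    rw [← map_mul, ← castL_mul]
    rfl
  have claim3 : (LinearMap.mul' k (A q⁻¹) ∘ₗ TensorProduct.map LinearMap.id (H.S q))
        ∘ₗ H.e2 q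
      = LinearMap.toSpanSingleton k (A q⁻¹) 1 ∘ₗ H.ε.toLinearMap := by
    apply LinearMap.ext
    intro v
    simp only [LinearMap.comp_apply, AlgHom.toLinearMap_apply,
      LinearMap.toSpanSingleton_apply]
    show (LinearMap.mul' k (A q⁻¹))
        (TensorProduct.map LinearMap.id (H.S q)
          ((H.Δ q⁻¹ q) (castL k A (inv_mul_cancel q).symm v))) = _
    rw [H.antipode_right' q, castL_castL, castL_rfl]
  calc H.G2 q ∘ₗ TensorProduct.map (H.e2 q) (H.e2 q)
      = (LinearMap.mul' k (A q⁻¹) ∘ₗ TensorProduct.map LinearMap.id (H.S q))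
          ∘ₗ (LinearMap.mul' k (A q⁻¹ ⊗[k] A q)
              ∘ₗ TensorProduct.map (H.e2 q) (H.e2 q)) := by
        rw [claim1]; rfl
    _ = ((LinearMap.mul' k (A q⁻¹) ∘ₗ TensorProduct.map LinearMap.id (H.S q))
          ∘ₗ H.e2 q) ∘ₗ LinearMap.mul' k (A (1:G)) := by rw [claim2]; rfl
    _ = _ := by rw [claim3]; rfl

lemma CRM (q : G) (x : A q) :
    (TensorProduct.rid k (A q))
        (TensorProduct.map LinearMap.id H.ε.toLinearMap (H.dC q x)) = x := by
  show (TensorProduct.rid k (A q))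
      (TensorProduct.map LinearMap.id H.ε.toLinearMap
        ((H.Δ q 1) (castL k A (mul_one q).symm x))) = x
  rw [H.counit_right q, castL_castL, castL_rfl]

lemma step_b2 (q : G) :
    LinearMap.mul' k (A q⁻¹)
        ∘ₗ TensorProduct.map
            (LinearMap.mul' k (A q⁻¹) ∘ₗ TensorProduct.map (H.S q) (H.S q)
              ∘ₗ (TensorProduct.comm k (A q) (A q)).toLinearMap)
            (LinearMap.toSpanSingleton k (A q⁻¹) 1 ∘ₗ H.ε.toLinearMap
              ∘ₗ LinearMap.mul' k (A (1:G)))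
        ∘ₗ (TensorProduct.tensorTensorTensorComm k (A q) (A 1) (A q)
              (A 1)).toLinearMap
      = LinearMap.mul' k (A q⁻¹)
          ∘ₗ TensorProduct.map (H.S q) (H.S q)
          ∘ₗ (TensorProduct.comm k (A q) (A q)).toLinearMap
          ∘ₗ TensorProduct.map
              ((TensorProduct.rid k (A q)).toLinearMap
                ∘ₗ TensorProduct.map LinearMap.id H.ε.toLinearMap)
              ((TensorProduct.rid k (A q)).toLinearMap
                ∘ₗ TensorProduct.map LinearMap.id H.ε.toLinearMap) := by
  apply ext22
  intro x e y f
  simp only [LinearMap.comp_apply, TensorProduct.map_tmul,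
    TensorProduct.tensorTensorTensorComm_tmul, TensorProduct.comm_tmul,
    LinearMap.mul'_apply, LinearMap.id_apply, LinearMap.toSpanSingleton_apply,
    AlgHom.toLinearMap_apply, LinearEquiv.coe_coe, TensorProduct.rid_tmul,
    map_mul, map_smul]
  simp only [mul_one, mul_smul_comm, smul_smul]
  rw [smul_mul_assoc, smul_smul, mul_comm (H.ε e)]

lemma S_mul (q : G) (x y : A q) : H.S q (x * y) = H.S q y * H.S q x := by
  -- the common middle expression
  set t := H.T3 q y with ht
  have eA : H.phi2 q ((H.cx q (H.T3 q x)) ⊗ₜ t) = H.S q (x * y) := by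
    rw [H.collapse q x]
    have e1 : ((1 : A q⁻¹) ⊗ₜ[k] x) ⊗ₜ[k] t
        = TensorProduct.map (TensorProduct.mk k (A q⁻¹) (A q) 1) LinearMap.id
            (x ⊗ₜ t) := by simp
    rw [e1, ← LinearMap.comp_apply, H.step_x1 q, LinearMap.comp_apply]
    rw [TensorProduct.map_tmul, LinearMap.id_apply, ht, H.collapse q y,
      H.phi5_tmul, one_mul]
  have eB : H.phi2 q ((H.cx q (H.T3 q x)) ⊗ₜ t) = H.S q y * H.S q x := by
    have e1 : (H.cx q (H.T3 q x)) ⊗ₜ[k] t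
        = TensorProduct.map (H.cx q) LinearMap.id ((H.T3 q x) ⊗ₜ t) := by simp
    rw [e1, ← LinearMap.comp_apply, H.step_b1 q, ht]
    -- phiB (T3 x ⊗ T3 y)
    have e2 : (H.T3 q x) ⊗ₜ[k] (H.T3 q y)
        = TensorProduct.map (TensorProduct.map LinearMap.id (H.e2 q))
            (TensorProduct.map LinearMap.id (H.e2 q))
            ((H.dC q x) ⊗ₜ (H.dC q y)) := by
      simp only [TensorProduct.map_tmul]; rfl
    rw [e2]
    show (H.phiB q ∘ₗ TensorProduct.map (TensorProduct.map LinearMap.id (H.e2 q))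
        (TensorProduct.map LinearMap.id (H.e2 q))) ((H.dC q x) ⊗ₜ (H.dC q y)) = _
    have e3 : H.phiB q ∘ₗ TensorProduct.map (TensorProduct.map LinearMap.id (H.e2 q))
        (TensorProduct.map LinearMap.id (H.e2 q))
        = LinearMap.mul' k (A q⁻¹)
          ∘ₗ TensorProduct.map
              (LinearMap.mul' k (A q⁻¹) ∘ₗ TensorProduct.map (H.S q) (H.S q)
                ∘ₗ (TensorProduct.comm k (A q) (A q)).toLinearMap)
              (LinearMap.toSpanSingleton k (A q⁻¹) 1 ∘ₗ H.ε.toLinearMap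
                ∘ₗ LinearMap.mul' k (A (1:G)))
          ∘ₗ (TensorProduct.tensorTensorTensorComm k (A q) (A 1) (A q)
                (A 1)).toLinearMap := by
      apply ext22
      intro x1 e y1 f
      have hg : H.G2 q ((H.e2 q e) ⊗ₜ (H.e2 q f))
          = LinearMap.toSpanSingleton k (A q⁻¹) 1
              (H.ε (LinearMap.mul' k (A (1:G)) (e ⊗ₜ f))) := by
        have h := LinearMap.ext_iff.mp (H.G2e2 q) (e ⊗ₜ f)
        simpa using h
      simp only [LinearMap.comp_apply, TensorProduct.map_tmul, LinearMap.id_apply, phiB,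
        TensorProduct.tensorTensorTensorComm_tmul, LinearEquiv.coe_coe]
      rw [hg]
      rfl
    rw [e3, H.step_b2 q]
    simp only [LinearMap.comp_apply, TensorProduct.map_tmul, LinearEquiv.coe_coe,
      H.CRM q, TensorProduct.comm_tmul, LinearMap.mul'_apply]
  rw [← eA, eB]

/-! ### Machinery at the index `p` for the main theorem -/

noncomputable def S2 (p : G) : A p⁻¹ →ₗ[k] A p := castL k A (inv_inv p) ∘ₗ H.S p⁻¹

lemma S2_mul (p : G) (x y : A p⁻¹) : H.S2 p (x * y) = H.S2 p y * H.S2 p x := by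
  show castL k A (inv_inv p) (H.S p⁻¹ (x * y)) = _
  rw [H.S_mul p⁻¹, castL_mul]; rfl

lemma S2_one (p : G) : H.S2 p (1 : A p⁻¹) = 1 := by
  show castL k A (inv_inv p) (H.S p⁻¹ 1) = 1
  rw [H.S_one, castL_one]

noncomputable def Mmu (p : G) : A p⁻¹ ⊗[k] A p →ₗ[k] A p :=
  LinearMap.mul' k (A p) ∘ₗ TensorProduct.map (H.S2 p) (H.S2 p ∘ₗ H.S p)

noncomputable def P0 (p : G) (g : A p →ₗ[k] k) : A p →ₗ[k] A p⁻¹ ⊗[k] A p :=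
  (TensorProduct.comm k (A p) (A p⁻¹)).toLinearMap
    ∘ₗ TensorProduct.map LinearMap.id
        ((TensorProduct.rid k (A p⁻¹)).toLinearMap ∘ₗ TensorProduct.map LinearMap.id g)
    ∘ₗ H.T3 p

noncomputable def rho (p : G) (g : A p →ₗ[k] k) : A p⁻¹ ⊗[k] A p →ₗ[k] A p :=
  (TensorProduct.rid k (A p)).toLinearMap ∘ₗ TensorProduct.map (H.S2 p) g

lemma theta (p : G) (g : A p →ₗ[k] k) (w : A p) :
    H.Mmu p (H.P0 p g w) = g w • 1 := by
  have e1 : H.Mmu p ∘ₗ ((TensorProduct.comm k (A p) (A p⁻¹)).toLinearMap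
      ∘ₗ TensorProduct.map LinearMap.id
        ((TensorProduct.rid k (A p⁻¹)).toLinearMap ∘ₗ TensorProduct.map LinearMap.id g))
      = H.rho p g ∘ₗ H.cx p := by
    apply ext3R; intro u v z
    simp only [LinearMap.comp_apply, TensorProduct.map_tmul, LinearMap.id_apply,
      LinearEquiv.coe_coe, TensorProduct.rid_tmul, TensorProduct.comm_tmul, Mmu, rho,
      H.cx_tmul, LinearMap.mul'_apply, map_smul, TensorProduct.smul_tmul',
      TensorProduct.smul_tmul]
    rw [H.S2_mul, mul_smul_comm]
  have e2 : H.P0 p g w = ((TensorProduct.comm k (A p) (A p⁻¹)).toLinearMap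
      ∘ₗ TensorProduct.map LinearMap.id
        ((TensorProduct.rid k (A p⁻¹)).toLinearMap ∘ₗ TensorProduct.map LinearMap.id g))
      (H.T3 p w) := rfl
  rw [e2, ← LinearMap.comp_apply, e1, LinearMap.comp_apply, H.collapse p w]
  simp only [rho, LinearMap.comp_apply, TensorProduct.map_tmul, LinearEquiv.coe_coe,
    TensorProduct.rid_tmul, H.S2_one]

lemma keyF (p : G) (g : A p →ₗ[k] k) (f : A p⁻¹ →ₗ[k] k) :
    (TensorProduct.rid k (A p)).toLinearMap
        ∘ₗ TensorProduct.map LinearMap.id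
            ((LinearMap.mul' k k ∘ₗ TensorProduct.map f g ∘ₗ (H.Δ p⁻¹ p).toLinearMap)
              ∘ₗ castL k A (inv_mul_cancel p).symm)
        ∘ₗ (H.Δ p 1).toLinearMap ∘ₗ castL k A (mul_one p).symm
      = ((TensorProduct.lid k (A p)).toLinearMap ∘ₗ TensorProduct.map f LinearMap.id)
          ∘ₗ H.P0 p g := by
  have core : (TensorProduct.rid k (A p)).toLinearMap
        ∘ₗ TensorProduct.map LinearMap.id
            ((LinearMap.mul' k k ∘ₗ TensorProduct.map f g ∘ₗ (H.Δ p⁻¹ p).toLinearMap)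
              ∘ₗ castL k A (inv_mul_cancel p).symm)
      = (((TensorProduct.lid k (A p)).toLinearMap ∘ₗ TensorProduct.map f LinearMap.id)
          ∘ₗ (TensorProduct.comm k (A p) (A p⁻¹)).toLinearMap
          ∘ₗ TensorProduct.map LinearMap.id
              ((TensorProduct.rid k (A p⁻¹)).toLinearMap ∘ₗ TensorProduct.map LinearMap.id g))
          ∘ₗ TensorProduct.map LinearMap.id (H.e2 p) := by
    apply TensorProduct.ext'
    intro u e
    have scal : ∀ T : A p⁻¹ ⊗[k] A p,
        LinearMap.mul' k k (TensorProduct.map f g T)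
          = f ((TensorProduct.rid k (A p⁻¹))
              (TensorProduct.map LinearMap.id g T)) := by
      intro T
      have : (LinearMap.mul' k k ∘ₗ TensorProduct.map f g) T
          = (f ∘ₗ (TensorProduct.rid k (A p⁻¹)).toLinearMap
              ∘ₗ TensorProduct.map LinearMap.id g) T := by
        refine LinearMap.ext_iff.mp ?_ T
        apply TensorProduct.ext'
        intro c d
        simp only [LinearMap.comp_apply, TensorProduct.map_tmul, LinearMap.mul'_apply,
          LinearEquiv.coe_coe, TensorProduct.rid_tmul, LinearMap.id_apply, map_smul]
        rw [smul_eq_mul, mul_comm]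
      simpa using this
    simp only [LinearMap.comp_apply, TensorProduct.map_tmul, LinearMap.id_apply,
      LinearEquiv.coe_coe, TensorProduct.rid_tmul, TensorProduct.comm_tmul,
      TensorProduct.lid_tmul]
    rw [scal]
    show f _ • u = (TensorProduct.lid k (A p))
        ((TensorProduct.map f LinearMap.id)
          ((TensorProduct.comm k (A p) (A p⁻¹))
            (u ⊗ₜ ((TensorProduct.rid k (A p⁻¹))
              (TensorProduct.map LinearMap.id g (H.e2 p e))))))
    simp only [TensorProduct.comm_tmul, TensorProduct.map_tmul, LinearMap.id_apply,
      TensorProduct.lid_tmul]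
    rfl
  apply LinearMap.ext
  intro x
  have : H.P0 p g x = (((TensorProduct.comm k (A p) (A p⁻¹)).toLinearMap
      ∘ₗ TensorProduct.map LinearMap.id
          ((TensorProduct.rid k (A p⁻¹)).toLinearMap ∘ₗ TensorProduct.map LinearMap.id g))
      ∘ₗ TensorProduct.map LinearMap.id (H.e2 p))
      ((H.Δ p 1) (castL k A (mul_one p).symm x)) := rfl
  simp only [LinearMap.comp_apply] at core ⊢
  rw [this]
  have := LinearMap.ext_iff.mp core ((H.Δ p 1) (castL k A (mul_one p).symm x))
  simp only [LinearMap.comp_apply] at this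
  exact this

lemma trace_k_endo (e : k →ₗ[k] k) : LinearMap.trace k k e = e 1 := by
  have he : e = e 1 • LinearMap.id := by
    apply LinearMap.ext; intro c
    have : e c = e (c • 1) := by rw [smul_eq_mul, mul_one]
    rw [this, map_smul]
    simp [smul_eq_mul, mul_comm]
  rw [he, map_smul, LinearMap.trace_id]
  simp [Module.finrank_self]

end HopfGCoalgebra

/-- with `(e_i)` a basis of `A p⁻¹`, dual basis `(f_i)`, `g ∈ (A p)*`
and `h_i := f_i·g ∈ (A e)*`, one has `g(a) = Σ_i φ_{h_i}^p (a · S_{p⁻¹}(e_i))`. -/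
theorem eval_by_phi
    {k : Type u} [Field k] {G : Type v} [Group G]
    (A : G → Type w) [∀ p, Ring (A p)] [∀ p, Algebra k (A p)]
    [∀ p, FiniteDimensional k (A p)]
    (H : HopfGCoalgebra k A) (p : G)
    {ι : Type} [Fintype ι] (b : Module.Basis ι k (A p⁻¹))
    (g : A p →ₗ[k] k)
    (h : ι → (A (1 : G) →ₗ[k] k))
    (hh : ∀ i, h i = (H.dmul (b.coord i) g) ∘ₗ castL k A (inv_mul_cancel p).symm) :
    ∀ a : A p,
      g a = ∑ i : ι, H.phi (h i) p (a * castL k A (inv_inv p) (H.S p⁻¹ (b i))) := by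
  intro a
  classical
  set pr : ι → (A p⁻¹ ⊗[k] A p →ₗ[k] A p) := fun i =>
    (TensorProduct.lid k (A p)).toLinearMap ∘ₗ TensorProduct.map (b.coord i) LinearMap.id
    with hpr
  set ins : ι → (A p →ₗ[k] A p⁻¹ ⊗[k] A p) := fun i =>
    TensorProduct.mk k (A p⁻¹) (A p) (b i) with hins
  set Xi : A p⁻¹ ⊗[k] A p →ₗ[k] A p⁻¹ ⊗[k] A p :=
    H.P0 p g ∘ₗ LinearMap.mul k (A p) a ∘ₗ H.Mmu p with hXi
  -- Step 1 : each summand is the trace of pr i ∘ Xi ∘ ins i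
  have claim1 : ∀ i, H.phi (h i) p (a * castL k A (inv_inv p) (H.S p⁻¹ (b i)))
      = LinearMap.trace k (A p) (pr i ∘ₗ (Xi ∘ₗ ins i)) := by
    intro i
    have ephi : H.phi (h i) p (a * castL k A (inv_inv p) (H.S p⁻¹ (b i)))
        = LinearMap.trace k (A p)
            (((TensorProduct.rid k (A p)).toLinearMap ∘ₗ
              TensorProduct.map LinearMap.id (h i) ∘ₗ
              (H.Δ p 1).toLinearMap ∘ₗ castL k A (mul_one p).symm) ∘ₗ
            (LinearMap.mul k (A p) (a * castL k A (inv_inv p) (H.S p⁻¹ (b i))) ∘ₗ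
              (castL k A (inv_inv p) ∘ₗ (H.S p⁻¹) ∘ₗ H.S p))) := rfl
    rw [ephi]
    congr 1
    have hF : (TensorProduct.rid k (A p)).toLinearMap ∘ₗ
          TensorProduct.map LinearMap.id (h i) ∘ₗ
          (H.Δ p 1).toLinearMap ∘ₗ castL k A (mul_one p).symm
        = pr i ∘ₗ H.P0 p g := by
      rw [hh i]
      have := H.keyF p g (b.coord i)
      rw [hpr]
      calc (TensorProduct.rid k (A p)).toLinearMap ∘ₗ
            TensorProduct.map LinearMap.id
              (H.dmul (b.coord i) g ∘ₗ castL k A (inv_mul_cancel p).symm) ∘ₗ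
            (H.Δ p 1).toLinearMap ∘ₗ castL k A (mul_one p).symm
          = (TensorProduct.rid k (A p)).toLinearMap
              ∘ₗ TensorProduct.map LinearMap.id
                  ((LinearMap.mul' k k ∘ₗ TensorProduct.map (b.coord i) g
                      ∘ₗ (H.Δ p⁻¹ p).toLinearMap)
                    ∘ₗ castL k A (inv_mul_cancel p).symm)
              ∘ₗ (H.Δ p 1).toLinearMap ∘ₗ castL k A (mul_one p).symm := rfl
        _ = ((TensorProduct.lid k (A p)).toLinearMap
              ∘ₗ TensorProduct.map (b.coord i) LinearMap.id) ∘ₗ H.P0 p g := this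
    rw [hF]
    apply LinearMap.ext
    intro x
    simp only [LinearMap.comp_apply, hXi, LinearMap.mul_apply']
    congr 2
    have hM : H.Mmu p ((ins i) x) = H.S2 p (b i) * H.S2 p (H.S p x) := by
      simp only [hins, TensorProduct.mk_apply, HopfGCoalgebra.Mmu, LinearMap.comp_apply,
        TensorProduct.map_tmul, LinearMap.mul'_apply]
    rw [hM, ← mul_assoc]
    rfl
  -- Step 2 : Σ ins i ∘ pr i = id
  have sum_id : (∑ i, ins i ∘ₗ pr i)
      = (LinearMap.id : A p⁻¹ ⊗[k] A p →ₗ[k] A p⁻¹ ⊗[k] A p) := by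
    apply TensorProduct.ext'
    intro u x
    rw [LinearMap.sum_apply]
    have e1 : ∀ i, (ins i ∘ₗ pr i) (u ⊗ₜ x) = (b.repr u i • b i) ⊗ₜ[k] x := by
      intro i
      simp only [hins, hpr, LinearMap.comp_apply, TensorProduct.map_tmul,
        LinearEquiv.coe_coe, TensorProduct.lid_tmul, LinearMap.id_apply,
        TensorProduct.mk_apply, Module.Basis.coord_apply, TensorProduct.tmul_smul]
      rw [TensorProduct.smul_tmul']
    rw [Finset.sum_congr rfl (fun i _ => e1 i), ← TensorProduct.sum_tmul,
      b.sum_repr u, LinearMap.id_apply]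
  -- Step 3 : assemble the traces
  have step3 : ∑ i, LinearMap.trace k (A p) (pr i ∘ₗ (Xi ∘ₗ ins i))
      = LinearMap.trace k (A p⁻¹ ⊗[k] A p) Xi := by
    have e1 : ∀ i, LinearMap.trace k (A p) (pr i ∘ₗ (Xi ∘ₗ ins i))
        = LinearMap.trace k (A p⁻¹ ⊗[k] A p) (Xi ∘ₗ (ins i ∘ₗ pr i)) := by
      intro i
      rw [LinearMap.trace_comp_comm' _ (pr i), LinearMap.comp_assoc]
    rw [Finset.sum_congr rfl (fun i _ => e1 i)]
    have e2 : ∀ i, Xi ∘ₗ (ins i ∘ₗ pr i)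
        = LinearMap.llcomp k (A p⁻¹ ⊗[k] A p) (A p⁻¹ ⊗[k] A p) (A p⁻¹ ⊗[k] A p) Xi
            (ins i ∘ₗ pr i) := fun i => rfl
    rw [Finset.sum_congr rfl (fun i _ => congrArg _ (e2 i)), ← map_sum, ← map_sum,
      sum_id]
    congr 1
  -- Step 4 : compute the trace of Xi
  have step4 : LinearMap.trace k (A p⁻¹ ⊗[k] A p) Xi = g a := by
    have e1 : Xi = (H.P0 p g ∘ₗ LinearMap.mul k (A p) a) ∘ₗ H.Mmu p := by
      rw [hXi, LinearMap.comp_assoc]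
    rw [e1, LinearMap.trace_comp_comm']
    have e2 : H.Mmu p ∘ₗ (H.P0 p g ∘ₗ LinearMap.mul k (A p) a)
        = LinearMap.toSpanSingleton k (A p) 1 ∘ₗ (g ∘ₗ LinearMap.mul k (A p) a) := by
      apply LinearMap.ext
      intro x
      simp only [LinearMap.comp_apply, LinearMap.mul_apply',
        LinearMap.toSpanSingleton_apply]
      exact H.theta p g (a * x)
    rw [e2, LinearMap.trace_comp_comm', HopfGCoalgebra.trace_k_endo]
    simp only [LinearMap.comp_apply, LinearMap.toSpanSingleton_apply,
      LinearMap.mul_apply', one_smul, mul_one]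
  rw [Finset.sum_congr rfl (fun i _ => claim1 i), step3, step4]
end

section
/- Let ((A_p)_{p∈G}, (Δ_{p,q}), ε, (S_p)) be a finite-type Hopf G-coalgebra over a field k. Let p, r ∈ G, f ∈ (A_r)*, and a ∈ A_{r⁻¹}. Let (e_i) be a basis of A_p with dual basis (f_i). Write Δ_{r⁻¹p⁻¹,p}(a) = Σ_{(a)} a_(1) ⊗ a_(2) (with a_(1) ∈ A_{r⁻¹p⁻¹}, a_(2) ∈ A_p). For a functional h on an algebra A_s and an element c ∈ A_s, write h(·c) for the functional x ↦ h(x·c) on A_s. Then, as elements of (A_{pr})* ⊗ A_p: Σ_i (f_i · (f(· S_{r⁻¹}(a)))) ⊗ e_i = Σ_i Σ_{(a)} ((f_i·f)(· S_{r⁻¹p⁻¹}(a_(1)))) ⊗ (e_i · a_(2)). -/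
open TensorProduct

universe u v w

variable (k : Type u) [Field k] {G : Type v} [Group G]

section Aux

set_option linter.unusedSectionVars false
variable {k} {A : G → Type w} [∀ p, Ring (A p)] [∀ p, Algebra k (A p)]

@[simp] lemma castL_id {p : G} (h : p = p) : castL k A h = LinearMap.id := rfl

lemma castL_irrel {p q : G} (h h' : p = q) (x : A p) : castL k A h x = castL k A h' x := rfl

@[simp] lemma castL_castL {p q r : G} (h1 : p = q) (h2 : q = r) (x : A p) :
    castL k A h2 (castL k A h1 x) = castL k A (h1.trans h2) x := by subst h1; subst h2; rfl

lemma castL_S (H : HopfGCoalgebra k A) {p q : G} (h : p = q) (x : A p) :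
    H.S q (castL k A h x) = castL k A (congrArg Inv.inv h) (H.S p x) := by subst h; rfl

lemma castL_Δ (H : HopfGCoalgebra k A) {u u' v v' : G} (h1 : u = u') (h2 : v = v')
    (h : u * v = u' * v') (x : A (u * v)) :
    H.Δ u' v' (castL k A h x)
      = TensorProduct.map (castL k A h1) (castL k A h2) (H.Δ u v x) := by
  subst h1; subst h2
  simp only [castL_id, TensorProduct.map_id]
  rfl

lemma coassoc' (H : HopfGCoalgebra k A) (q1 q2 q3 : G) {u : G}
    (h : u = q1 * (q2 * q3)) (h' : u = q1 * q2 * q3) (x : A u) :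
    TensorProduct.map LinearMap.id (H.Δ q2 q3).toLinearMap
        (H.Δ q1 (q2 * q3) (castL k A h x))
      = TensorProduct.assoc k (A q1) (A q2) (A q3)
          (TensorProduct.map (H.Δ q1 q2).toLinearMap LinearMap.id
            (H.Δ (q1 * q2) q3 (castL k A h' x))) := by
  have hc := H.coassoc q1 q2 q3 (castL k A h' x)
  have e1 : castL k A (mul_assoc q1 q2 q3) (castL k A h' x) = castL k A h x := by
    rw [castL_castL]
  rw [e1] at hc
  exact hc.symm

end Aux

section Key
set_option linter.unusedSectionVars false
set_option maxHeartbeats 1000000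
set_option synthInstance.maxHeartbeats 400000

variable {k} {A : G → Type w} [∀ p, Ring (A p)] [∀ p, Algebra k (A p)]

lemma map_id_comp_apply {M N₁ N₂ N₃ : Type*} [AddCommGroup M] [AddCommGroup N₁]
    [AddCommGroup N₂] [AddCommGroup N₃] [Module k M] [Module k N₁] [Module k N₂] [Module k N₃]
    (f : N₁ →ₗ[k] N₂) (g : N₂ →ₗ[k] N₃) (X : M ⊗[k] N₁) :
    TensorProduct.map LinearMap.id g (TensorProduct.map LinearMap.id f X)
      = TensorProduct.map LinearMap.id (g ∘ₗ f) X := by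
  rw [← LinearMap.comp_apply, ← TensorProduct.map_comp, LinearMap.id_comp]

lemma map_comp_id_apply {M N₁ N₂ N₃ : Type*} [AddCommGroup M] [AddCommGroup N₁]
    [AddCommGroup N₂] [AddCommGroup N₃] [Module k M] [Module k N₁] [Module k N₂] [Module k N₃]
    (f : N₁ →ₗ[k] N₂) (g : N₂ →ₗ[k] N₃) (X : N₁ ⊗[k] M) :
    TensorProduct.map g LinearMap.id (TensorProduct.map f LinearMap.id X)
      = TensorProduct.map (g ∘ₗ f) LinearMap.id X := by
  rw [← LinearMap.comp_apply, ← TensorProduct.map_comp, LinearMap.id_comp]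

lemma map_unit_right (p q : G) (t : A p ⊗[k] k) :
    TensorProduct.map LinearMap.id (Algebra.linearMap k (A q)) t
      = (TensorProduct.rid k (A p)) t ⊗ₜ[k] (1 : A q) := by
  induction t using TensorProduct.induction_on with
  | zero => simp
  | tmul u c =>
      simp [Algebra.algebraMap_eq_smul_one, TensorProduct.tmul_smul,
        TensorProduct.smul_tmul']
  | add x y hx hy => simp [hx, hy, add_tmul]

lemma keyK (H : HopfGCoalgebra k A) (p r : G) (a : A r⁻¹)
    {ι' : Type} [Fintype ι'] (a1 : ι' → A (r⁻¹ * p⁻¹)) (a2 : ι' → A p)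
    (h₀ : r⁻¹ = r⁻¹ * p⁻¹ * p) (hpr : (r⁻¹ * p⁻¹)⁻¹ = p * r)
    (ha : H.Δ (r⁻¹ * p⁻¹) p (castL k A h₀ a) = ∑ j : ι', a1 j ⊗ₜ[k] a2 j) :
    ∑ j : ι', (H.Δ p r (castL k A hpr (H.S (r⁻¹ * p⁻¹) (a1 j)))) * (a2 j ⊗ₜ[k] (1 : A r))
      = (1 : A p) ⊗ₜ[k] castL k A (inv_inv r) (H.S r⁻¹ a) := by
  classical
  have h1 : (1:G) = r⁻¹ * p⁻¹ * (p * r) := by group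
  have h₂ : p = p * r * r⁻¹ := by group
  have h₂' : p = p * (r * r⁻¹) := by group
  have h₃ : r⁻¹ = r⁻¹ * p⁻¹ * (p * r * r⁻¹) := by group
  have h₄ : r⁻¹ = r⁻¹ * p⁻¹ * (p * r) * r⁻¹ := by group
  set D : A (r⁻¹ * p⁻¹) →ₗ[k] A p ⊗[k] A r :=
    (H.Δ p r).toLinearMap ∘ₗ castL k A hpr ∘ₗ H.S (r⁻¹ * p⁻¹) with hD
  set inn : A r ⊗[k] A r⁻¹ →ₗ[k] A r :=
    LinearMap.mul' k (A r) ∘ₗ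
      TensorProduct.map LinearMap.id ((castL k A (inv_inv r)).comp (H.S r⁻¹)) with hinn
  set W : A p ⊗[k] (A r ⊗[k] A r⁻¹) →ₗ[k] A p ⊗[k] A r :=
    TensorProduct.map LinearMap.id inn with hW
  set Θ : A p →ₗ[k] A p ⊗[k] (A r ⊗[k] A r⁻¹) :=
    TensorProduct.map LinearMap.id
        ((H.Δ r r⁻¹).toLinearMap ∘ₗ castL k A (mul_inv_cancel r).symm) ∘ₗ
      (H.Δ p 1).toLinearMap ∘ₗ castL k A (mul_one p).symm with hΘ
  set Lfin : A (r⁻¹ * p⁻¹) ⊗[k] (A p ⊗[k] (A r ⊗[k] A r⁻¹)) →ₗ[k] A p ⊗[k] A r :=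
    TensorProduct.lift (((LinearMap.mul k (A p ⊗[k] A r)) ∘ₗ D).compl₂ W) with hLfin
  set F2 : A (p * r) ⊗[k] A r⁻¹ →ₗ[k] A p ⊗[k] (A r ⊗[k] A r⁻¹) :=
    (TensorProduct.assoc k (A p) (A r) (A r⁻¹)).toLinearMap ∘ₗ
      TensorProduct.map (H.Δ p r).toLinearMap LinearMap.id with hF2
  -- W ∘ Θ is `⊗ₜ 1`
  have hWΘ : ∀ c : A p, W (Θ c) = c ⊗ₜ[k] (1 : A r) := by
    intro c
    have hg : inn ∘ₗ ((H.Δ r r⁻¹).toLinearMap ∘ₗ castL k A (mul_inv_cancel r).symm)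
        = Algebra.linearMap k (A r) ∘ₗ H.ε.toLinearMap := by
      apply LinearMap.ext; intro v
      have har := H.antipode_right r (castL k A (mul_inv_cancel r).symm v)
      simp only [castL_castL, castL_id, LinearMap.id_coe, id_eq] at har
      simp only [hinn, LinearMap.coe_comp, Function.comp_apply, Algebra.linearMap_apply,
        Algebra.algebraMap_eq_smul_one, AlgHom.toLinearMap_apply]
      exact har
    simp only [hΘ, hW, LinearMap.coe_comp, Function.comp_apply]
    rw [map_id_comp_apply, hg, ← map_id_comp_apply, map_unit_right]
    simp only [AlgHom.toLinearMap_apply]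
    rw [H.counit_right p (castL k A (mul_one p).symm c)]
    simp only [castL_castL, castL_id, LinearMap.id_coe, id_eq]
  -- Θ in coassociated form
  have hTheta2 : ∀ c : A p,
      Θ c = F2 ((H.Δ (p * r) r⁻¹).toLinearMap (castL k A h₂ c)) := by
    intro c
    simp only [hΘ, hF2, LinearMap.coe_comp, Function.comp_apply, AlgHom.toLinearMap_apply,
      LinearEquiv.coe_coe]
    rw [← map_id_comp_apply]
    have e : (H.Δ p (r * r⁻¹)) (castL k A h₂' c)
        = TensorProduct.map LinearMap.id (castL k A (mul_inv_cancel r).symm)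
            ((H.Δ p 1) (castL k A (mul_one p).symm c)) := by
      have e0 := castL_Δ H (rfl : p = p) ((mul_inv_cancel r).symm)
        (by group : p * 1 = p * (r * r⁻¹)) (castL k A (mul_one p).symm c)
      rw [castL_castL] at e0
      simp only [castL_id] at e0
      exact e0
    rw [← e]
    exact coassoc' H p r r⁻¹ h₂' h₂ c
  have hΘmap : Θ = F2 ∘ₗ (H.Δ (p * r) r⁻¹).toLinearMap ∘ₗ castL k A h₂ :=
    LinearMap.ext fun c => hTheta2 c
  -- the coassociativity chain
  have hchain : TensorProduct.map LinearMap.id Θ ((H.Δ (r⁻¹ * p⁻¹) p) (castL k A h₀ a))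
      = TensorProduct.map LinearMap.id F2
          ((TensorProduct.assoc k (A (r⁻¹ * p⁻¹)) (A (p * r)) (A r⁻¹))
            (TensorProduct.map ((H.Δ (r⁻¹ * p⁻¹) (p * r)).toLinearMap ∘ₗ castL k A h1)
              LinearMap.id
              ((H.Δ 1 r⁻¹) (castL k A (one_mul r⁻¹).symm a)))) := by
    rw [hΘmap, ← map_id_comp_apply ((H.Δ (p * r) r⁻¹).toLinearMap ∘ₗ castL k A h₂) F2]
    congr 1
    rw [← map_id_comp_apply (castL k A h₂) (H.Δ (p * r) r⁻¹).toLinearMap]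
    have e2 : (H.Δ (r⁻¹ * p⁻¹) (p * r * r⁻¹)) (castL k A h₃ a)
        = TensorProduct.map LinearMap.id (castL k A h₂)
            ((H.Δ (r⁻¹ * p⁻¹) p) (castL k A h₀ a)) := by
      have e0 := castL_Δ H (rfl : r⁻¹ * p⁻¹ = r⁻¹ * p⁻¹) h₂
        (by group : r⁻¹ * p⁻¹ * p = r⁻¹ * p⁻¹ * (p * r * r⁻¹)) (castL k A h₀ a)
      rw [castL_castL] at e0
      simp only [castL_id] at e0
      exact e0
    rw [← e2, coassoc' H (r⁻¹ * p⁻¹) (p * r) r⁻¹ h₃ h₄ a]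
    congr 1
    have e3 : (H.Δ (r⁻¹ * p⁻¹ * (p * r)) r⁻¹) (castL k A h₄ a)
        = TensorProduct.map (castL k A h1) LinearMap.id
            ((H.Δ 1 r⁻¹) (castL k A (one_mul r⁻¹).symm a)) := by
      have e0 := castL_Δ H h1 (rfl : r⁻¹ = r⁻¹)
        (by group : 1 * r⁻¹ = r⁻¹ * p⁻¹ * (p * r) * r⁻¹)
        (castL k A (one_mul r⁻¹).symm a)
      rw [castL_castL] at e0
      simp only [castL_id] at e0
      exact e0
    rw [e3, map_comp_id_apply]
  -- antipode collapse
  have hanti : ∀ α : A (1 : G),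
      LinearMap.mul' k (A (p * r))
          (TensorProduct.map ((castL k A hpr).comp (H.S (r⁻¹ * p⁻¹))) LinearMap.id
            ((H.Δ (r⁻¹ * p⁻¹) (p * r)) (castL k A h1 α)))
        = H.ε α • (1 : A (p * r)) := by
    intro α
    have hal := H.antipode_left (p * r) (castL k A (inv_mul_cancel (p * r)).symm α)
    have e4 : (H.Δ (p * r)⁻¹ (p * r)) (castL k A (inv_mul_cancel (p * r)).symm α)
        = TensorProduct.map (castL k A (mul_inv_rev p r).symm) LinearMap.id
            ((H.Δ (r⁻¹ * p⁻¹) (p * r)) (castL k A h1 α)) := by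
      have e0 := castL_Δ H ((mul_inv_rev p r).symm) (rfl : p * r = p * r)
        (by group : r⁻¹ * p⁻¹ * (p * r) = (p * r)⁻¹ * (p * r))
        (castL k A h1 α)
      rw [castL_castL] at e0
      simp only [castL_id] at e0
      exact e0
    rw [e4, map_comp_id_apply] at hal
    have e5 : ((castL k A (inv_inv (p * r))).comp (H.S (p * r)⁻¹)) ∘ₗ
          castL k A (mul_inv_rev p r).symm
        = (castL k A hpr).comp (H.S (r⁻¹ * p⁻¹)) := by
      apply LinearMap.ext; intro x
      simp only [LinearMap.coe_comp, Function.comp_apply]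
      rw [castL_S H ((mul_inv_rev p r).symm) x, castL_castL]
    rw [e5] at hal
    simpa only [castL_castL, castL_id, LinearMap.id_coe, id_eq] using hal
  -- W on associated products
  have hW' : ∀ (Y : A p ⊗[k] A r) (z : A r⁻¹),
      W ((TensorProduct.assoc k (A p) (A r) (A r⁻¹)) (Y ⊗ₜ[k] z))
        = Y * ((1 : A p) ⊗ₜ[k] castL k A (inv_inv r) (H.S r⁻¹ z)) := by
    intro Y z
    induction Y using TensorProduct.induction_on with
    | zero => simp
    | tmul y1 y2 =>
        simp [hW, hinn, Algebra.TensorProduct.tmul_mul_tmul]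
    | add x y hx hy => simp [add_tmul, hx, hy, add_mul]
  -- Lfin on the path-B shape
  have hsub1 : ∀ (T : A (r⁻¹ * p⁻¹) ⊗[k] A (p * r)) (z : A r⁻¹),
      Lfin (TensorProduct.map LinearMap.id F2
          ((TensorProduct.assoc k (A (r⁻¹ * p⁻¹)) (A (p * r)) (A r⁻¹)) (T ⊗ₜ[k] z)))
        = (H.Δ p r) (LinearMap.mul' k (A (p * r))
              (TensorProduct.map ((castL k A hpr).comp (H.S (r⁻¹ * p⁻¹))) LinearMap.id T))
            * ((1 : A p) ⊗ₜ[k] castL k A (inv_inv r) (H.S r⁻¹ z)) := by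
    intro T z
    induction T using TensorProduct.induction_on with
    | zero => simp
    | tmul a1' y =>
        simp only [assoc_tmul, map_tmul, LinearMap.id_coe, id_eq, hF2,
          LinearMap.coe_comp, Function.comp_apply, LinearEquiv.coe_coe,
          AlgHom.toLinearMap_apply, hLfin, lift.tmul, LinearMap.compl₂_apply,
          LinearMap.mul_apply', LinearMap.mul'_apply]
        rw [hW' ((H.Δ p r) y) z]
        simp only [hD, LinearMap.coe_comp, Function.comp_apply, AlgHom.toLinearMap_apply,
          map_mul, ← mul_assoc]
    | add x y hx hy =>
        simp only [add_tmul, map_add, hx, hy, add_mul]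
  -- final evaluation
  have hfinal : ∀ t' : A 1 ⊗[k] A r⁻¹,
      Lfin (TensorProduct.map LinearMap.id F2
          ((TensorProduct.assoc k (A (r⁻¹ * p⁻¹)) (A (p * r)) (A r⁻¹))
            (TensorProduct.map ((H.Δ (r⁻¹ * p⁻¹) (p * r)).toLinearMap ∘ₗ castL k A h1)
              LinearMap.id t')))
        = (1 : A p) ⊗ₜ[k] castL k A (inv_inv r)
            (H.S r⁻¹ ((TensorProduct.lid k (A r⁻¹))
              (TensorProduct.map H.ε.toLinearMap LinearMap.id t'))) := by
    intro t'
    induction t' using TensorProduct.induction_on with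
    | zero => simp
    | tmul α z =>
        simp only [map_tmul, LinearMap.coe_comp, Function.comp_apply,
          AlgHom.toLinearMap_apply, LinearMap.id_coe, id_eq]
        rw [hsub1, hanti]
        simp [smul_mul_assoc, TensorProduct.lid_tmul, TensorProduct.tmul_smul]
    | add x y hx hy =>
        simp only [map_add, hx, hy, tmul_add]
  -- assemble
  calc ∑ j : ι', (H.Δ p r (castL k A hpr (H.S (r⁻¹ * p⁻¹) (a1 j)))) * (a2 j ⊗ₜ[k] (1 : A r))
      = Lfin (TensorProduct.map LinearMap.id Θ
          ((H.Δ (r⁻¹ * p⁻¹) p) (castL k A h₀ a))) := by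
        rw [ha, map_sum, map_sum]
        refine Finset.sum_congr rfl fun j _ => ?_
        simp only [map_tmul, LinearMap.id_coe, id_eq, hLfin, lift.tmul,
          LinearMap.compl₂_apply, LinearMap.coe_comp, Function.comp_apply,
          LinearMap.mul_apply', hWΘ, hD, AlgHom.toLinearMap_apply]
    _ = (1 : A p) ⊗ₜ[k] castL k A (inv_inv r)
            (H.S r⁻¹ ((TensorProduct.lid k (A r⁻¹))
              (TensorProduct.map H.ε.toLinearMap LinearMap.id
                ((H.Δ 1 r⁻¹) (castL k A (one_mul r⁻¹).symm a))))) := by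
        rw [hchain]; exact hfinal _
    _ = (1 : A p) ⊗ₜ[k] castL k A (inv_inv r) (H.S r⁻¹ a) := by
        rw [H.counit_left r⁻¹ (castL k A (one_mul r⁻¹).symm a)]
        simp only [castL_castL, castL_id, LinearMap.id_coe, id_eq]

end Key

section Main
set_option linter.unusedSectionVars false
set_option maxHeartbeats 1000000
set_option synthInstance.maxHeartbeats 400000

variable {k} {A : G → Type w} [∀ p, Ring (A p)] [∀ p, Algebra k (A p)]

lemma sum_coord {p r : G} {ι : Type} [Fintype ι] (b : Module.Basis ι k (A p))
    (g : A r →ₗ[k] k) (t : A p ⊗[k] A r) :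
    ∑ i : ι, (LinearMap.mul' k k) (TensorProduct.map (b.coord i) g t) • b i
      = (TensorProduct.rid k (A p)) (TensorProduct.map LinearMap.id g t) := by
  induction t using TensorProduct.induction_on with
  | zero => simp
  | tmul u w =>
      simp only [map_tmul, LinearMap.mul'_apply, rid_tmul, LinearMap.id_coe, id_eq,
        Module.Basis.coord_apply]
      calc ∑ i : ι, ((b.repr u) i * g w) • b i
          = ∑ i : ι, g w • ((b.repr u) i • b i) := by
            refine Finset.sum_congr rfl fun i _ => ?_
            rw [mul_comm, ← smul_smul]
        _ = g w • u := by rw [← Finset.smul_sum, b.sum_repr]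
  | add x y hx hy =>
      simp only [map_add, smul_add, add_smul, Finset.sum_add_distrib, hx, hy]

lemma rid_mulRight {p r : G} (f : A r →ₗ[k] k) (m : A r) (t : A p ⊗[k] A r) :
    (TensorProduct.rid k (A p))
        (TensorProduct.map LinearMap.id (f ∘ₗ LinearMap.mulRight k m) t)
      = (TensorProduct.rid k (A p))
          (TensorProduct.map LinearMap.id f (t * ((1 : A p) ⊗ₜ[k] m))) := by
  induction t using TensorProduct.induction_on with
  | zero => simp
  | tmul u w => simp [Algebra.TensorProduct.tmul_mul_tmul]
  | add x y hx hy => simp only [map_add, add_mul, hx, hy]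

lemma rid_mulRight' {p r : G} (f : A r →ₗ[k] k) (c : A p) (t : A p ⊗[k] A r) :
    (TensorProduct.rid k (A p)) (TensorProduct.map LinearMap.id f t) * c
      = (TensorProduct.rid k (A p))
          (TensorProduct.map LinearMap.id f (t * (c ⊗ₜ[k] (1 : A r)))) := by
  induction t using TensorProduct.induction_on with
  | zero => simp
  | tmul u w => simp [Algebra.TensorProduct.tmul_mul_tmul, smul_mul_assoc]
  | add x y hx hy => simp only [map_add, add_mul, hx, hy]

end Main

/-- in `(A (pr))* ⊗ A p`,
`Σ_i (f_i·(f(·S_{r⁻¹}(a)))) ⊗ e_i = Σ_i Σ_{(a)} ((f_i·f)(·S_{r⁻¹p⁻¹}(a₍₁₎))) ⊗ (e_i·a₍₂₎)`. -/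
theorem dual_basis_antipode_shift
    {k : Type u} [Field k] {G : Type v} [Group G]
    (A : G → Type w) [∀ p, Ring (A p)] [∀ p, Algebra k (A p)]
    [∀ p, FiniteDimensional k (A p)]
    (H : HopfGCoalgebra k A) (p r : G)
    (f : A r →ₗ[k] k) (a : A r⁻¹)
    {ι : Type} [Fintype ι] (b : Module.Basis ι k (A p))
    {ι' : Type} [Fintype ι']
    (a1 : ι' → A (r⁻¹ * p⁻¹)) (a2 : ι' → A p)
    (ha : (H.Δ (r⁻¹ * p⁻¹) p)
        (castL k A (by rw [mul_assoc, inv_mul_cancel, mul_one]) a)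
      = ∑ j : ι', a1 j ⊗ₜ[k] a2 j) :
    ∑ i : ι,
        (H.dmul (b.coord i)
            (f ∘ₗ LinearMap.mulRight k (castL k A (inv_inv r) (H.S r⁻¹ a))))
          ⊗ₜ[k] b i
      = ∑ i : ι, ∑ j : ι',
          ((H.dmul (b.coord i) f) ∘ₗ
              LinearMap.mulRight k
                (castL k A (by rw [mul_inv_rev, inv_inv, inv_inv])
                  (H.S (r⁻¹ * p⁻¹) (a1 j))))
            ⊗ₜ[k] (b i * a2 j) := by
  classical
  have h₀ : r⁻¹ = r⁻¹ * p⁻¹ * p := by group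
  have hpr : (r⁻¹ * p⁻¹)⁻¹ = p * r := by group
  have hKK := keyK H p r a a1 a2 h₀ hpr ha
  show
    ∑ i : ι,
        (H.dmul (b.coord i)
            (f ∘ₗ LinearMap.mulRight k (castL k A (inv_inv r) (H.S r⁻¹ a))))
          ⊗ₜ[k] b i
      = ∑ i : ι, ∑ j : ι',
          ((H.dmul (b.coord i) f) ∘ₗ
              LinearMap.mulRight k (castL k A hpr (H.S (r⁻¹ * p⁻¹) (a1 j))))
            ⊗ₜ[k] (b i * a2 j)
  apply (dualTensorHomEquivOfBasis (N := A p) (Module.Free.chooseBasis k (A (p * r)))).injective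
  rw [dualTensorHomEquivOfBasis_apply, dualTensorHomEquivOfBasis_apply]
  apply LinearMap.ext; intro x
  simp only [map_sum, LinearMap.sum_apply, dualTensorHom_apply, HopfGCoalgebra.dmul,
    LinearMap.coe_comp, Function.comp_apply, AlgHom.toLinearMap_apply,
    LinearMap.mulRight_apply]
  rw [sum_coord b (f ∘ₗ LinearMap.mulRight k (castL k A (inv_inv r) (H.S r⁻¹ a))) (H.Δ p r x),
    rid_mulRight, Finset.sum_comm]
  have hj : ∀ j : ι',
      (∑ i : ι, (LinearMap.mul' k k)
          (TensorProduct.map (b.coord i) f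
            ((H.Δ p r) (x * castL k A hpr (H.S (r⁻¹ * p⁻¹) (a1 j))))) • (b i * a2 j))
        = (TensorProduct.rid k (A p))
            (TensorProduct.map LinearMap.id f
              ((H.Δ p r) x *
                ((H.Δ p r) (castL k A hpr (H.S (r⁻¹ * p⁻¹) (a1 j))) * (a2 j ⊗ₜ[k] 1)))) := by
    intro j
    simp only [← smul_mul_assoc]
    rw [← Finset.sum_mul,
      sum_coord b f ((H.Δ p r) (x * castL k A hpr (H.S (r⁻¹ * p⁻¹) (a1 j)))),
      map_mul, rid_mulRight', mul_assoc]
  simp only [hj]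
  rw [← map_sum, ← map_sum, ← Finset.mul_sum, hKK]
end
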